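/- Let A be a real n×n matrix that is Metzler (all off-diagonal entries are nonnegative) and Hurwitz (every complex eigenvalue of A has strictly negative real part). Then there exists a diagonal real n×n matrix D with strictly positive diagonal entries such that A D + D Aᵀ is negative definite. -/

import Mathlib

/-!
Shift `A` to a nonnegative matrix `B = A + s`. As `A` is Hurwitz, no real `t ≥ s` lies in the
spectrum of `B`, so the resolvent `(t - B)⁻¹` exists on `[s, ∞)`. It is entrywise nonnegative for
large `t` by the Neumann series, and nonnegativity propagates down the ray, again by a Neumann
series around each point; hence `(-A)⁻¹ = (s - B)⁻¹ ≥ 0`. Then `ξ = (-A)⁻¹ 1` and `η = (-Aᵀ)⁻¹ 1`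
are positive with `A ξ < 0` and `Aᵀ η < 0`. For `D = diag (ξ / η)` the symmetric Metzler matrix
`S = A D + D Aᵀ` satisfies `S η = A ξ + D Aᵀ η < 0`. Conjugating by `diag η` gives a symmetric
Metzler matrix `T` with negative row sums, and such a matrix is negative definite because
`∑ᵢⱼ Tᵢⱼ xᵢ xⱼ = ∑ᵢ (∑ⱼ Tᵢⱼ) xᵢ² - ½ ∑ᵢⱼ Tᵢⱼ (xᵢ - xⱼ)²`.
-/

attribute [local instance] Matrix.linftyOpNormedRing Matrix.linftyOpNormedAlgebra

namespace Matrix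

def IsMetzler {ι : Type*} (A : Matrix ι ι ℝ) : Prop := ∀ i j, i ≠ j → 0 ≤ A i j

lemma IsMetzler.transpose {ι : Type*} {A : Matrix ι ι ℝ} (hA : A.IsMetzler) : Aᵀ.IsMetzler :=
  fun i j hij => hA j i hij.symm

lemma mul_apply_nonneg {l m n R : Type*} [Fintype m] [Semiring R] [PartialOrder R]
    [IsOrderedRing R] {M : Matrix l m R} {N : Matrix m n R} (hM : ∀ i j, 0 ≤ M i j)
    (hN : ∀ i j, 0 ≤ N i j) (i : l) (j : n) : 0 ≤ (M * N) i j :=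
  Finset.sum_nonneg fun k _ => mul_nonneg (hM i k) (hN k j)

lemma isClosed_setOf_forall_apply_nonneg {ι : Type*} :
    IsClosed {M : Matrix ι ι ℝ | ∀ i j, 0 ≤ M i j} := by
  simp only [Set.ofPred_forall]
  exact isClosed_iInter fun i => isClosed_iInter fun j =>
    isClosed_le continuous_const (continuous_id.matrix_elem i j)

lemma apply_mem_spectrum_map_iff {n K L : Type*} [Fintype n] [DecidableEq n] [Field K] [Field L]
    (f : K →+* L) {A : Matrix n n K} {t : K} : f t ∈ spectrum L (A.map f) ↔ t ∈ spectrum K A := by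
  rw [mem_spectrum_iff_isRoot_charpoly, mem_spectrum_iff_isRoot_charpoly, charpoly_map,
    Polynomial.isRoot_map_iff f.injective]

lemma spectrum_transpose {n R : Type*} [Fintype n] [DecidableEq n] [CommRing R]
    (A : Matrix n n R) : spectrum R Aᵀ = spectrum R A := by
  ext t
  rw [spectrum.mem_iff, spectrum.mem_iff, ← isUnit_transpose, transpose_sub, transpose_transpose,
    algebraMap_eq_diagonal, Pi.algebraMap_def, diagonal_transpose]

section

variable {ι : Type*} [Fintype ι] [DecidableEq ι]

lemma algebraMap_apply_nonneg {r : ℝ} (hr : 0 ≤ r) (i j : ι) :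
    0 ≤ algebraMap ℝ (Matrix ι ι ℝ) r i j := by
  rw [algebraMap_matrix_apply]
  split_ifs <;> simp [hr]

lemma inv_one_sub_apply_nonneg {T : Matrix ι ι ℝ} (hT : ∀ i j, 0 ≤ T i j) (hT1 : ‖T‖ < 1)
    (i j : ι) : 0 ≤ (1 - T)⁻¹ i j := by
  rw [nonsing_inv_eq_ringInverse]
  exact (Pi.hasSum.mp (Pi.hasSum.mp (hasSum_geom_series_inverse T hT1) i) j).nonneg
    fun k => pow_apply_nonneg hT k i j

lemma inv_sub_apply_nonneg {X Y : Matrix ι ι ℝ} (hX : IsUnit X) (hXinv : ∀ i j, 0 ≤ X⁻¹ i j)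
    (hY : ∀ i j, 0 ≤ Y i j) (hXY : ‖X⁻¹ * Y‖ < 1) (i j : ι) : 0 ≤ (X - Y)⁻¹ i j := by
  have hfactor : X - Y = X * (1 - X⁻¹ * Y) := by
    rw [mul_sub, mul_one, ← mul_assoc, mul_nonsing_inv X ((isUnit_iff_isUnit_det X).mp hX),
      one_mul]
  rw [hfactor, mul_inv_rev]
  exact mul_apply_nonneg (inv_one_sub_apply_nonneg (mul_apply_nonneg hXinv hY) hXY) hXinv i j

lemma inv_sub_algebraMap_apply_nonneg {X : Matrix ι ι ℝ} (hX : IsUnit X)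
    (hXinv : ∀ i j, 0 ≤ X⁻¹ i j) {δ : ℝ} (hδ : 0 ≤ δ) (hδX : δ * ‖X⁻¹‖ < 1) (i j : ι) :
    0 ≤ (X - algebraMap ℝ _ δ)⁻¹ i j := by
  refine inv_sub_apply_nonneg hX hXinv (algebraMap_apply_nonneg hδ) ?_ i j
  rwa [← Algebra.commutes, ← Algebra.smul_def, norm_smul, Real.norm_eq_abs, abs_of_nonneg hδ]

lemma inv_algebraMap_sub_apply_nonneg_of_norm_lt {B : Matrix ι ι ℝ} (hB : ∀ i j, 0 ≤ B i j)
    {K : ℝ} (hBK : ‖B‖ < K) (i j : ι) : 0 ≤ (algebraMap ℝ _ K - B)⁻¹ i j := by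
  have hK : 0 < K := (norm_nonneg B).trans_lt hBK
  have hKinv : (algebraMap ℝ (Matrix ι ι ℝ) K)⁻¹ = algebraMap ℝ _ K⁻¹ :=
    inv_eq_left_inv (by rw [← map_mul, inv_mul_cancel₀ hK.ne', map_one])
  refine inv_sub_apply_nonneg ((isUnit_iff_ne_zero.mpr hK.ne').map _) ?_ hB ?_ i j
  · rw [hKinv]
    exact algebraMap_apply_nonneg (inv_nonneg.mpr hK.le)
  · rwa [hKinv, ← Algebra.smul_def, norm_smul, Real.norm_eq_abs, abs_inv, abs_of_pos hK,
      inv_mul_lt_one₀ hK]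

lemma continuousOn_inv_algebraMap_sub (B : Matrix ι ι ℝ) :
    ContinuousOn (fun t => (algebraMap ℝ (Matrix ι ι ℝ) t - B)⁻¹) (spectrum ℝ B)ᶜ := by
  intro t ht
  have hdet : (algebraMap ℝ (Matrix ι ι ℝ) t - B).det ≠ 0 :=
    ((isUnit_iff_isUnit_det _).mp (spectrum.notMem_iff.mp ht)).ne_zero
  refine ((continuousAt_matrix_inv _ ?_).comp (by fun_prop)).continuousWithinAt
  rw [Ring.inverse_eq_inv']
  exact continuousAt_inv₀ hdet

theorem inv_algebraMap_sub_apply_nonneg {B : Matrix ι ι ℝ} (hB : ∀ i j, 0 ≤ B i j) {s : ℝ}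
    (hs : ∀ t, s ≤ t → t ∉ spectrum ℝ B) (i j : ι) : 0 ≤ (algebraMap ℝ _ s - B)⁻¹ i j := by
  set R : ℝ → Matrix ι ι ℝ := fun t => (algebraMap ℝ _ t - B)⁻¹ with hR
  set T : Set ℝ := {t | s ≤ t ∧ ∀ i j, 0 ≤ R t i j}
  have hT_nonempty : T.Nonempty :=
    ⟨|s| + ‖B‖ + 1, by linarith [le_abs_self s, norm_nonneg B],
      inv_algebraMap_sub_apply_nonneg_of_norm_lt hB (by linarith [abs_nonneg s])⟩
  have hT_closed : IsClosed T :=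
    ((continuousOn_inv_algebraMap_sub B).mono fun t ht => hs t ht).preimage_isClosed_of_isClosed
      isClosed_Ici isClosed_setOf_forall_apply_nonneg
  have hc : sInf T ∈ T := hT_closed.csInf_mem hT_nonempty ⟨s, fun t ht => ht.1⟩
  suffices sInf T = s by simpa [this] using hc.2 i j
  by_contra hne
  set c := sInf T
  have hsc : s < c := lt_of_le_of_ne hc.1 (Ne.symm hne)
  obtain ⟨ε, hε, hεR⟩ := exists_pos_mul_lt one_pos ‖R c‖
  set δ := min ε (c - s)
  have hδ : 0 < δ := lt_min hε (sub_pos.mpr hsc)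
  have hstep : c - δ ∈ T := by
    refine ⟨by linarith [min_le_right ε (c - s)], fun i j => ?_⟩
    have hshift : algebraMap ℝ (Matrix ι ι ℝ) (c - δ) - B
        = (algebraMap ℝ _ c - B) - algebraMap ℝ _ δ := by
      rw [map_sub]; abel
    simp only [hR, hshift]
    refine inv_sub_algebraMap_apply_nonneg (spectrum.notMem_iff.mp (hs c hc.1)) hc.2 hδ.le ?_ i j
    calc δ * ‖R c‖ ≤ ε * ‖R c‖ := by gcongr; exact min_le_left _ _
      _ < 1 := by linarith
  linarith [csInf_le ⟨s, fun t ht => ht.1⟩ hstep]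

theorem IsMetzler.inv_neg_apply_nonneg {A : Matrix ι ι ℝ} (hA : A.IsMetzler)
    (hspec : ∀ t, 0 ≤ t → t ∉ spectrum ℝ A) (i j : ι) : 0 ≤ (-A)⁻¹ i j := by
  obtain ⟨s, hs⟩ := Finite.exists_le fun i => -A i i
  have hB : ∀ i j, 0 ≤ (algebraMap ℝ _ s + A) i j := by
    intro i j
    rw [add_apply, algebraMap_matrix_apply]
    split_ifs with hij
    · subst hij; simp only [Algebra.algebraMap_self, RingHom.id_apply]; linarith [hs i]
    · simpa using hA i j hij
  have hshift : ∀ t, s ≤ t → t ∉ spectrum ℝ (algebraMap ℝ _ s + A) := fun t ht => by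
    rw [← sub_add_cancel t s, spectrum.add_mem_add_iff]
    exact hspec _ (sub_nonneg.mpr ht)
  simpa using inv_algebraMap_sub_apply_nonneg hB hshift i j

lemma inv_mulVec_one_apply_pos {M : Matrix ι ι ℝ} (hM : IsUnit M) (hinv : ∀ i j, 0 ≤ M⁻¹ i j)
    (i : ι) : 0 < (M⁻¹ *ᵥ 1) i := by
  have hrow : (M⁻¹ *ᵥ 1) i = ∑ j, M⁻¹ i j := by simp [mulVec, dotProduct]
  rw [hrow]
  refine (Finset.sum_nonneg fun j _ => hinv i j).lt_of_ne fun hzero => ?_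
  have hrow_zero : ∀ j, M⁻¹ i j = 0 := fun j =>
    (Finset.sum_eq_zero_iff_of_nonneg fun j _ => hinv i j).mp hzero.symm j (Finset.mem_univ j)
  have hii := congr_fun₂ (nonsing_inv_mul M ((isUnit_iff_isUnit_det M).mp hM)) i i
  simp [mul_apply, hrow_zero] at hii

theorem IsMetzler.exists_pos_mulVec_neg {A : Matrix ι ι ℝ} (hA : A.IsMetzler)
    (hspec : ∀ t, 0 ≤ t → t ∉ spectrum ℝ A) :
    ∃ ξ : ι → ℝ, (∀ i, 0 < ξ i) ∧ ∀ i, (A *ᵥ ξ) i < 0 := by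
  have hunit : IsUnit (-A) := by simpa using spectrum.notMem_iff.mp (hspec 0 le_rfl)
  refine ⟨(-A)⁻¹ *ᵥ 1, inv_mulVec_one_apply_pos hunit (hA.inv_neg_apply_nonneg hspec), fun i => ?_⟩
  have hinv : (-A) * (-A)⁻¹ = 1 := mul_nonsing_inv _ ((isUnit_iff_isUnit_det _).mp hunit)
  have : A *ᵥ ((-A)⁻¹ *ᵥ 1) = -1 := by
    rw [mulVec_mulVec, ← neg_neg A, neg_mul, neg_neg, hinv, neg_mulVec, one_mulVec]
  simp [this]

end

lemma sum_sum_mul_sub_sq {ι R : Type*} [Fintype ι] [CommRing R] {T : ι → ι → R}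
    (hT : ∀ i j, T i j = T j i) (w : ι → R) :
    ∑ i, ∑ j, T i j * (w i - w j) ^ 2
      = 2 * (∑ i, (∑ j, T i j) * w i ^ 2 - ∑ i, ∑ j, T i j * w i * w j) := by
  have hswap : ∑ i, ∑ j, T i j * w j ^ 2 = ∑ i, ∑ j, T i j * w i ^ 2 := by
    rw [Finset.sum_comm]
    exact Finset.sum_congr rfl fun i _ => Finset.sum_congr rfl fun j _ => by rw [hT]
  calc ∑ i, ∑ j, T i j * (w i - w j) ^ 2
      = ∑ i, ∑ j, (T i j * w i ^ 2 + T i j * w j ^ 2 - 2 * (T i j * w i * w j)) := by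
        simp only [sub_sq']; congr! 2; ring
    _ = _ := by
        simp only [Finset.sum_add_distrib, Finset.sum_sub_distrib, ← Finset.mul_sum,
          Finset.sum_mul, hswap]
        ring

theorem IsMetzler.posDef_neg_of_sum_neg {ι : Type*} [Fintype ι] {T : Matrix ι ι ℝ}
    (hT : T.IsMetzler) (hsymm : T.IsSymm) (hrow : ∀ i, ∑ j, T i j < 0) : (-T).PosDef := by
  refine PosDef.of_dotProduct_mulVec_pos (isHermitian_iff_isSymm.mpr hsymm.neg) fun x hx => ?_
  have hquad : star x ⬝ᵥ (-T) *ᵥ x = -∑ i, ∑ j, T i j * x i * x j := by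
    simp only [star_trivial, dotProduct, mulVec, neg_apply, Finset.mul_sum,
      ← Finset.sum_neg_distrib]
    congr! 2; ring
  have hid := sum_sum_mul_sub_sq (fun i j => hsymm.apply j i) x
  have hdiff : 0 ≤ ∑ i, ∑ j, T i j * (x i - x j) ^ 2 :=
    Finset.sum_nonneg fun i _ => Finset.sum_nonneg fun j _ => by
      rcases eq_or_ne i j with rfl | hij
      · simp
      · exact mul_nonneg (hT i j hij) (sq_nonneg _)
  obtain ⟨k, hk⟩ : ∃ k, x k ≠ 0 := Function.ne_iff.mp hx
  have hdiag : ∑ i, (∑ j, T i j) * x i ^ 2 < 0 :=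
    Finset.sum_neg' (fun i _ => mul_nonpos_of_nonpos_of_nonneg (hrow i).le (sq_nonneg _))
      ⟨k, Finset.mem_univ k, mul_neg_of_neg_of_pos (hrow k) (by positivity)⟩
  rw [hquad]
  linarith

section

variable {ι : Type*} [Fintype ι] [DecidableEq ι]

theorem IsMetzler.posDef_neg_of_mulVec_neg {S : Matrix ι ι ℝ} (hS : S.IsMetzler)
    (hsymm : S.IsSymm) {η : ι → ℝ} (hη : ∀ i, 0 < η i) (hSη : ∀ i, (S *ᵥ η) i < 0) :
    (-S).PosDef := by
  have hD : IsUnit (diagonal η) :=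
    isUnit_diagonal.mpr (Pi.isUnit_iff.mpr fun i => (hη i).ne'.isUnit)
  have hentry : ∀ i j, (diagonal η * S * diagonal η) i j = η i * S i j * η j := by
    simp [diagonal_mul, mul_diagonal]
  rw [← Matrix.IsUnit.posDef_star_left_conjugate_iff hD, star_eq_conjTranspose,
    diagonal_conjTranspose, star_trivial, mul_neg, neg_mul]
  refine IsMetzler.posDef_neg_of_sum_neg (fun i j hij => ?_) ?_ fun i => ?_
  · rw [hentry]
    have := hS i j hij
    have := hη i
    have := hη j
    positivity
  · simp [IsSymm, transpose_mul, hsymm.eq, mul_assoc]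
  · have hrow : ∑ j, η i * S i j * η j = η i * (S *ᵥ η) i := by
      simp [mulVec, dotProduct, Finset.mul_sum, mul_assoc]
    simpa only [hentry, hrow] using mul_neg_of_pos_of_neg (hη i) (hSη i)

theorem IsMetzler.posDef_neg_mul_diagonal_add_diagonal_mul_transpose {A : Matrix ι ι ℝ}
    (hA : A.IsMetzler) {ξ η : ι → ℝ} (hξ : ∀ i, 0 < ξ i) (hη : ∀ i, 0 < η i)
    (hAξ : ∀ i, (A *ᵥ ξ) i < 0) (hAη : ∀ i, (Aᵀ *ᵥ η) i < 0) :
    (-(A * diagonal (ξ / η) + diagonal (ξ / η) * Aᵀ)).PosDef := by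
  have hd : ∀ i, 0 < (ξ / η) i := fun i => div_pos (hξ i) (hη i)
  refine IsMetzler.posDef_neg_of_mulVec_neg (fun i j hij => ?_) ?_ hη fun i => ?_
  · simp only [add_apply, mul_diagonal, diagonal_mul, transpose_apply]
    have := hA i j hij
    have := hA j i hij.symm
    have := hd i
    have := hd j
    positivity
  · simp [IsSymm, transpose_mul, add_comm]
  · have hdη : diagonal (ξ / η) *ᵥ η = ξ := by
      ext i; rw [mulVec_diagonal, Pi.div_apply, div_mul_cancel₀ _ (hη i).ne']
    rw [add_mulVec, ← mulVec_mulVec, ← mulVec_mulVec, hdη, Pi.add_apply, mulVec_diagonal]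
    linarith [hAξ i, mul_neg_of_pos_of_neg (hd i) (hAη i)]

end

end Matrix

open Matrix

/-- A Metzler (nonnegative off-diagonal entries) Hurwitz matrix admits a
diagonal Lyapunov solution: there is a diagonal `D` with strictly positive
diagonal entries such that `A D + D Aᵀ` is negative definite. -/
theorem metzler_hurwitz_diagonal_lyapunov
    {n : ℕ} (A : Matrix (Fin n) (Fin n) ℝ)
    (hMetzler : ∀ i j, i ≠ j → 0 ≤ A i j)
    (hHurwitz : ∀ μ ∈ spectrum ℂ (A.map (Complex.ofReal)), μ.re < 0) :
    ∃ d : Fin n → ℝ, (∀ i, 0 < d i) ∧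
      (-(A * diagonal d + diagonal d * Aᵀ)).PosDef := by
  have hspec : ∀ t : ℝ, 0 ≤ t → t ∉ spectrum ℝ A := fun t ht hmem => by
    have := hHurwitz _ ((apply_mem_spectrum_map_iff Complex.ofRealHom).mpr hmem)
    simp only [Complex.ofRealHom_eq_coe, Complex.ofReal_re] at this
    linarith
  obtain ⟨ξ, hξ, hAξ⟩ := IsMetzler.exists_pos_mulVec_neg hMetzler hspec
  obtain ⟨η, hη, hAη⟩ := IsMetzler.exists_pos_mulVec_neg (IsMetzler.transpose hMetzler)
    (by simpa only [spectrum_transpose] using hspec)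
  exact ⟨ξ / η, fun i => div_pos (hξ i) (hη i),
    IsMetzler.posDef_neg_mul_diagonal_add_diagonal_mul_transpose hMetzler hξ hη hAξ hAη⟩
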